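/- arXiv:math/0412231 — 4 statements merged into one kernel-verified Lean document; each statement's English description precedes it below -/
import Mathlib

section
/- Let E be a full Hilbert module over a unital C*-algebra B (i.e. the closed span of all inner products ⟨x,y⟩, x,y ∈ E, equals B). Then there exists n ∈ ℕ such that the direct sum E^n contains a unit vector, i.e. an element X = (x_1,…,x_n) with Σ_{i=1}^n ⟨x_i,x_i⟩ = 1. -/
open scoped RightActions

/-- The class `CStarModule` as it stood in Mathlib (December 2024): a *right* Hilbert
C⋆-module, with `A`-valued inner product satisfying `⟪x, y <• a⟫ = ⟪x, y⟫ * a`. -/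
class RightCStarModule (A E : Type*) [NonUnitalSemiring A] [StarRing A]
    [Module ℂ A] [AddCommGroup E] [Module ℂ E] [PartialOrder A] [SMul Aᵐᵒᵖ E] [Norm A] [Norm E]
    extends Inner A E where
  inner_add_right {x} {y} {z} : inner x (y + z) = inner x y + inner x z
  inner_self_nonneg {x} : 0 ≤ inner x x
  inner_self {x} : inner x x = 0 ↔ x = 0
  inner_op_smul_right {a : A} {x y : E} : inner x (y <• a) = inner x y * a
  inner_smul_right_complex {z : ℂ} {x} {y} : inner x (z • y) = z • inner x y
  star_inner x y : star (inner x y) = inner y x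
  norm_eq_sqrt_norm_inner_self x : ‖x‖ = Real.sqrt ‖inner x x‖

theorem RightCStarModule.inner_add_left {A E : Type*} [NonUnitalSemiring A] [StarRing A]
    [Module ℂ A] [AddCommGroup E] [Module ℂ E] [PartialOrder A] [SMul Aᵐᵒᵖ E] [Norm A] [Norm E]
    [RightCStarModule A E] {x y z : E} : inner A (x + y) z = inner A x z + inner A y z := by
  rw [← RightCStarModule.star_inner z (x + y), RightCStarModule.inner_add_right, star_add,
    RightCStarModule.star_inner, RightCStarModule.star_inner]

theorem RightCStarModule.inner_op_smul_left {A E : Type*} [NonUnitalSemiring A] [StarRing A]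
    [Module ℂ A] [AddCommGroup E] [Module ℂ E] [PartialOrder A] [SMul Aᵐᵒᵖ E] [Norm A] [Norm E]
    [RightCStarModule A E] {a : A} {x y : E} : inner A (x <• a) y = star a * inner A x y := by
  rw [← RightCStarModule.star_inner y (x <• a), RightCStarModule.inner_op_smul_right, star_mul,
    RightCStarModule.star_inner]

/-- **Lemma 3.2.** Let `E` be a full Hilbert module over a unital
C*-algebra `B` (the closed linear span of all inner products `⟪x, y⟫` is `B`).
Then there is `n : ℕ` such that `E^n` has a unit vector, i.e. there are
`x₁, …, xₙ ∈ E` with `∑ i, ⟪xᵢ, xᵢ⟫ = 1`. -/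
theorem exists_unit_vector_in_finite_multiple_of_full
    {B : Type*} [CStarAlgebra B] [PartialOrder B] [StarOrderedRing B]
    {E : Type*} [NormedAddCommGroup E] [Module ℂ E] [Module Bᵐᵒᵖ E]
    [RightCStarModule B E] [CompleteSpace E]
    (hfull : closure (Submodule.span ℂ {b : B | ∃ x y : E, (inner B x y : B) = b} :
      Set B) = Set.univ) :
    ∃ (n : ℕ) (v : Fin n → E), ∑ i, (inner B (v i) (v i) : B) = 1 := by
  classical
  -- Find an element `a` of the span of inner products close to `1`.
  have h1 : (1 : B) ∈ closure (Submodule.span ℂ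
      {b : B | ∃ x y : E, (inner B x y : B) = b} : Set B) := by
    rw [hfull]; trivial
  rw [Metric.mem_closure_iff] at h1
  obtain ⟨a, haS, hdist⟩ := h1 (1/2) (by norm_num)
  rw [SetLike.mem_coe] at haS
  obtain ⟨n, f, g, hsum⟩ := Submodule.mem_span_set'.mp haS
  choose x y hxy using fun i => (g i).2
  set z : Fin n → E := fun i => f i • y i with hz
  set w : Fin n → E := fun i => x i + z i with hw
  set s : B := a + star a with hs
  set d : B := ∑ i, (inner B (w i) (w i) : B) with hd
  -- Express `a` and `star a` as sums of inner products.
  have ha : a = ∑ i, (inner B (x i) (z i) : B) := by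
    rw [← hsum]
    refine Finset.sum_congr rfl fun i _ => ?_
    simp only [hz, RightCStarModule.inner_smul_right_complex, hxy]
  have hstar : star a = ∑ i, (inner B (z i) (x i) : B) := by
    rw [ha, star_sum]
    exact Finset.sum_congr rfl fun i _ => RightCStarModule.star_inner _ _
  have hd0 : (0 : B) ≤ d := Finset.sum_nonneg fun i _ => RightCStarModule.inner_self_nonneg
  -- `s = a + a* ≤ d`.
  have hsd : s ≤ d := by
    rw [hs, hstar, ha, ← Finset.sum_add_distrib, hd]
    refine Finset.sum_le_sum fun i _ => ?_
    rw [← sub_nonneg]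
    have hexp : (inner B (w i) (w i) : B) -
        ((inner B (x i) (z i) : B) + (inner B (z i) (x i) : B))
        = (inner B (x i) (x i) : B) + (inner B (z i) (z i) : B) := by
      simp only [hw, RightCStarModule.inner_add_left, RightCStarModule.inner_add_right]
      abel
    rw [hexp]
    exact add_nonneg RightCStarModule.inner_self_nonneg RightCStarModule.inner_self_nonneg
  -- `1 ≤ s`.
  have hna : ‖(1 : B) - a‖ < 1/2 := by rwa [← dist_eq_norm]
  have hs_sa : IsSelfAdjoint s := by
    simp [hs, IsSelfAdjoint, star_add, add_comm]
  have h2s_sa : IsSelfAdjoint ((2 : B) - s) := by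
    rw [IsSelfAdjoint, star_sub, hs_sa.star_eq]
    norm_num
  have h2s : ‖(2 : B) - s‖ ≤ 1 := by
    have hrw : (2 : B) - s = (1 - a) + (1 - star a) := by
      rw [hs, show (2:B) = 1 + 1 from one_add_one_eq_two.symm]; abel
    rw [hrw]
    have h2 : ‖(1 : B) - star a‖ = ‖(1 : B) - a‖ := by
      rw [show (1 : B) - star a = star (1 - a) by simp, norm_star]
    calc ‖(1 - a) + (1 - star a)‖ ≤ ‖(1 : B) - a‖ + ‖(1 : B) - star a‖ := norm_add_le _ _
      _ = ‖(1 : B) - a‖ + ‖(1 : B) - a‖ := by rw [h2]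
      _ ≤ 1 := by linarith
  have halg : ∀ t : ℝ, 0 ≤ t → (0 : B) ≤ algebraMap ℝ B t := by
    intro t ht
    have h := star_mul_self_nonneg ((Real.sqrt t) • (1 : B))
    rwa [star_smul, star_one, star_trivial, smul_mul_smul_comm, one_mul,
      Real.mul_self_sqrt ht, ← Algebra.algebraMap_eq_smul_one] at h
  have key : (2 : B) - s ≤ algebraMap ℝ B ‖(2 : B) - s‖ :=
    h2s_sa.le_algebraMap_norm_self
  have halg1 : algebraMap ℝ B ‖(2 : B) - s‖ ≤ 1 := by
    have h := halg (1 - ‖(2 : B) - s‖) (by linarith)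
    rw [map_sub, map_one] at h
    exact sub_nonneg.mp h
  have h1s : (1 : B) ≤ s := by
    have h3 : (2 : B) - s ≤ 1 := key.trans halg1
    have h4 := sub_le_iff_le_add.mp h3
    rw [show (2 : B) = 1 + 1 from one_add_one_eq_two.symm] at h4
    exact (add_le_add_iff_left (1 : B)).mp h4
  -- `d` is a positive invertible element.
  have hd_unit : IsUnit d :=
    CStarAlgebra.isUnit_of_le 1 (h1s.trans hsd)
  set e : B := d ^ (-(1/2) : ℝ) with he_def
  have he : (0 : B) ≤ e := CFC.rpow_nonneg
  have he_sa : star e = e := (IsSelfAdjoint.of_nonneg he).star_eq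
  refine ⟨n, fun i => w i <• e, ?_⟩
  calc ∑ i, (inner B (w i <• e) (w i <• e) : B)
      = ∑ i, star e * ((inner B (w i) (w i) : B) * e) := by
        refine Finset.sum_congr rfl fun i _ => ?_
        rw [RightCStarModule.inner_op_smul_left, RightCStarModule.inner_op_smul_right]
    _ = star e * (d * e) := by rw [← Finset.mul_sum, hd, Finset.sum_mul]
    _ = e * d * e := by rw [he_sa, mul_assoc]
    _ = 1 := CFC.conjugate_rpow_neg_one_half (a := d) ⟨hd0, hd_unit⟩
end

section
/- Let B be a unital C*-algebra and E a Hilbert B-module. If E contains two mutually orthogonal copies of a full Hilbert B-submodule — more precisely, if there exists a full closed submodule F ⊆ E and an isometric module map u : F → E with ⟨u(f), g⟩ = 0 for all f ∈ F, g ∈ F — then E has a unit vector. -/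
open scoped RightActions

section RightHelpers

variable {B : Type*} [CStarAlgebra B] [PartialOrder B] [StarOrderedRing B]
  {E : Type*} [NormedAddCommGroup E] [Module ℂ E] [Module Bᵐᵒᵖ E] [RightCStarModule B E]

attribute [simp] RightCStarModule.inner_add_right RightCStarModule.star_inner
  RightCStarModule.inner_op_smul_right RightCStarModule.inner_smul_right_complex

@[simp]
lemma rinner_add_left {x y z : E} : inner B (x + y) z = inner B x z + inner B y z := by
  rw [← star_star (r := inner B (x + y) z)]
  simp only [RightCStarModule.star_inner, RightCStarModule.inner_add_right, star_add]

@[simp]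
lemma rinner_op_smul_left {a : B} {x y : E} : inner B (x <• a) y = star a * inner B x y := by
  rw [← RightCStarModule.star_inner]; simp

@[simp]
lemma rinner_smul_left_complex {z : ℂ} {x y : E} : inner B (z • x) y = star z • inner B x y := by
  rw [← RightCStarModule.star_inner]
  simp

@[simp]
lemma rinner_smul_left_real {z : ℝ} {x y : E} : inner B (z • x) y = z • inner B x y := by
  have h₁ : z • x = (z : ℂ) • x := by simp
  rw [h₁, ← RightCStarModule.star_inner, RightCStarModule.inner_smul_right_complex]
  simp

@[simp]
lemma rinner_smul_right_real {z : ℝ} {x y : E} : inner B x (z • y) = z • inner B x y := by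
  have h₁ : z • y = (z : ℂ) • y := by simp
  rw [h₁, ← RightCStarModule.star_inner, rinner_smul_left_complex]
  simp

@[simp]
lemma rinner_zero_right {x : E} : inner B x (0 : E) = 0 := by
  have h := RightCStarModule.inner_add_right (A := B) (x := x) (y := (0 : E)) (z := 0)
  rw [add_zero] at h
  exact (left_eq_add.mp h)

@[simp]
lemma rinner_zero_left {x : E} : inner B (0 : E) x = 0 := by
  rw [← RightCStarModule.star_inner]; simp

@[simp]
lemma rinner_sub_right {x y z : E} : inner B x (y - z) = inner B x y - inner B x z := by
  have h := RightCStarModule.inner_add_right (A := B) (x := x) (y := y - z) (z := z)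
  rw [sub_add_cancel] at h
  rw [h, add_sub_cancel_right]

@[simp]
lemma rinner_sub_left {x y z : E} : inner B (x - y) z = inner B x z - inner B y z := by
  rw [← star_star (r := inner B (x - y) z)]
  simp only [RightCStarModule.star_inner, rinner_sub_right, star_sub]

lemma rinner_mul_inner_swap_le {x y : E} :
    inner B y x * inner B x y ≤ ‖x‖ ^ 2 • inner B y y := by
  rcases eq_or_ne x 0 with h | h
  · simp [h]
  · have h₁ : ∀ (a : B),
        (0 : B) ≤ ‖x‖ ^ 2 • (star a * a) - ‖x‖ ^ 2 • (star a * inner B x y)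
                  - ‖x‖ ^ 2 • (inner B y x * a) + ‖x‖ ^ 2 • (‖x‖ ^ 2 • inner B y y) := fun a => by
      calc (0 : B) ≤ inner B (x <• a - ‖x‖ ^ 2 • y) (x <• a - ‖x‖ ^ 2 • y) := by
                      exact RightCStarModule.inner_self_nonneg
            _ = star a * inner B x x * a - ‖x‖ ^ 2 • (star a * inner B x y)
                  - ‖x‖ ^ 2 • (inner B y x * a) + ‖x‖ ^ 2 • (‖x‖ ^ 2 • inner B y y) := by
                      simp only [rinner_sub_right, RightCStarModule.inner_op_smul_right,
                        rinner_sub_left, rinner_op_smul_left, rinner_smul_left_real,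
                        mul_sub, sub_mul, mul_smul_comm, smul_mul_assoc,
                        rinner_smul_right_real, smul_sub, mul_assoc]
                      abel
            _ ≤ ‖x‖ ^ 2 • (star a * a) - ‖x‖ ^ 2 • (star a * inner B x y)
                  - ‖x‖ ^ 2 • (inner B y x * a) + ‖x‖ ^ 2 • (‖x‖ ^ 2 • inner B y y) := by
                      gcongr
                      calc _ ≤ ‖inner B x x‖ • (star a * a) :=
                          CStarAlgebra.star_left_conjugate_le_norm_smul
                            (IsSelfAdjoint.of_nonneg RightCStarModule.inner_self_nonneg)
                        _ = (√‖inner B x x‖) ^ 2 • (star a * a) := by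
                          rw [Real.sq_sqrt]
                          positivity
                        _ = ‖x‖ ^ 2 • (star a * a) := by
                          rw [← RightCStarModule.norm_eq_sqrt_norm_inner_self]
    specialize h₁ (inner B x y)
    simp only [RightCStarModule.star_inner, sub_self, zero_sub, le_neg_add_iff_add_le,
      add_zero] at h₁
    rwa [smul_le_smul_iff_of_pos_left (pow_pos (norm_pos_iff.mpr h) _)] at h₁

end RightHelpers

/-- **Corollary 3.3.** If a Hilbert module `E` over a unital
C*-algebra contains arbitrarily many mutually orthogonal copies of a full
submodule — formalized, following the paper, in the special case that `E` is
full and `E ≅ E ⊕ E` as Hilbert `B`-modules (via an additive, `ℂ`-linear,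
`B`-linear, inner-product preserving bijection `Ψ : E → E × E`) — then `E`
has a unit vector. -/
theorem exists_unit_vector_of_full_and_selfsum
    {B : Type*} [CStarAlgebra B] [PartialOrder B] [StarOrderedRing B]
    {E : Type*} [NormedAddCommGroup E] [Module ℂ E] [Module Bᵐᵒᵖ E]
    [RightCStarModule B E] [CompleteSpace E]
    (hfull : closure (Submodule.span ℂ {b : B | ∃ x y : E, (inner B x y : B) = b} :
      Set B) = Set.univ)
    (Ψ : E → E × E)
    (hΨ_add : ∀ x y : E, Ψ (x + y) = Ψ x + Ψ y)
    (hΨ_smulC : ∀ (c : ℂ) (x : E), Ψ (c • x) = c • Ψ x)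
    (hΨ_smulB : ∀ (b : B) (x : E), Ψ (x <• b) = ((Ψ x).1 <• b, (Ψ x).2 <• b))
    (hΨ_bij : Function.Bijective Ψ)
    (hΨ_inner : ∀ x y : E,
      (inner B (Ψ x).1 (Ψ y).1 : B) + (inner B (Ψ x).2 (Ψ y).2 : B) = inner B x y) :
    ∃ ξ : E, (inner B ξ ξ : B) = 1 := by
  classical
  rcases subsingleton_or_nontrivial B with hB | hB
  · exact ⟨0, Subsingleton.elim _ _⟩
  -- the inverse of Ψ and the two orthogonal embeddings
  set e := Equiv.ofBijective Ψ hΨ_bij with he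
  set u : E → E := fun x => e.symm (x, 0) with hu
  set v : E → E := fun x => e.symm (0, x) with hv
  have hΨu : ∀ x : E, Ψ (u x) = (x, 0) := fun x => e.apply_symm_apply (x, 0)
  have hΨv : ∀ x : E, Ψ (v x) = (0, x) := fun x => e.apply_symm_apply (0, x)
  have huu : ∀ x y : E, (inner B (u x) (u y) : B) = inner B x y := by
    intro x y
    have := hΨ_inner (u x) (u y)
    rw [hΨu, hΨu] at this
    simpa using this.symm
  have hvv : ∀ x y : E, (inner B (v x) (v y) : B) = inner B x y := by
    intro x y
    have := hΨ_inner (v x) (v y)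
    rw [hΨv, hΨv] at this
    simpa using this.symm
  have huv : ∀ x y : E, (inner B (u x) (v y) : B) = 0 := by
    intro x y
    have := hΨ_inner (u x) (v y)
    rw [hΨu, hΨv] at this
    simpa using this.symm
  have hvu : ∀ x y : E, (inner B (v x) (u y) : B) = 0 := by
    intro x y
    have := hΨ_inner (v x) (u y)
    rw [hΨv, hΨu] at this
    simpa using this.symm
  -- the set of inner products is a ℂ-submodule
  set S : Set B := {b : B | ∃ x y : E, (inner B x y : B) = b} with hS
  have hadd : ∀ a b : B, a ∈ S → b ∈ S → a + b ∈ S := by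
    rintro a b ⟨x, y, rfl⟩ ⟨x', y', rfl⟩
    refine ⟨u x + v x', u y + v y', ?_⟩
    simp [huu, hvv, huv, hvu]
  have hsmul : ∀ (c : ℂ) (b : B), b ∈ S → c • b ∈ S := by
    rintro c b ⟨x, y, rfl⟩
    exact ⟨x, c • y, by simp⟩
  have hzero : (0 : B) ∈ S := ⟨0, 0, by simp⟩
  set Sₘ : Submodule ℂ B :=
    { carrier := S
      add_mem' := fun {a b} ha hb => hadd a b ha hb
      zero_mem' := hzero
      smul_mem' := fun c b hb => hsmul c b hb } with hSₘ
  have hspan : (Submodule.span ℂ S : Set B) = S := by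
    rw [show S = (Sₘ : Set B) from rfl, Submodule.span_eq]
  rw [hspan] at hfull
  -- get s = ⟪X, Y⟫ with ‖1 - s‖ < 1
  have h1 : (1 : B) ∈ closure S := hfull ▸ Set.mem_univ 1
  rw [Metric.mem_closure_iff] at h1
  obtain ⟨s, hsS, hs1⟩ := h1 1 one_pos
  obtain ⟨X, Y, hXY⟩ := hsS
  have hnorm : ‖(1 : B) - s‖ < 1 := by rwa [← dist_eq_norm]
  -- s is a unit
  have hsu : IsUnit s := by
    have := (Units.oneSub (1 - s) hnorm).isUnit
    simpa using this
  have hss : IsUnit (star s * s) := hsu.star.mul hsu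
  -- X ≠ 0
  have hX : X ≠ 0 := by
    rintro rfl
    rw [show (inner B (0 : E) Y : B) = 0 by simp] at hXY
    exact not_isUnit_zero (hXY ▸ hsu)
  have hc : (0 : ℝ) < ‖X‖ ^ 2 := pow_pos (norm_pos_iff.mpr hX) 2
  set a : B := inner B Y Y with ha
  have ha0 : (0 : B) ≤ a := RightCStarModule.inner_self_nonneg
  -- Cauchy-Schwarz
  have hCS : star s * s ≤ (‖X‖ ^ 2 : ℝ) • a := by
    have := rinner_mul_inner_swap_le (B := B) (x := X) (y := Y)
    rwa [hXY, show (inner B Y X : B) = star s by rw [← hXY]; simp] at this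
  -- the scaled element
  have hss0 : (0 : B) ≤ star s * s := star_mul_self_nonneg s
  have hsc : IsUnit ((‖X‖ ^ 2 : ℝ)⁻¹ • (star s * s)) := by
    obtain ⟨w, hw⟩ := hss
    refine isUnit_iff_exists.mpr ⟨(‖X‖ ^ 2 : ℝ) • (↑w⁻¹ : B), ?_, ?_⟩
    · rw [smul_mul_smul_comm, inv_mul_cancel₀ (ne_of_gt hc), one_smul, ← hw,
        Units.mul_inv]
    · rw [smul_mul_smul_comm, mul_inv_cancel₀ (ne_of_gt hc), one_smul, ← hw,
        Units.inv_mul]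
  have hsc0 : (0 : B) ≤ (‖X‖ ^ 2 : ℝ)⁻¹ • (star s * s) :=
    smul_nonneg (by positivity) hss0
  have hle : (‖X‖ ^ 2 : ℝ)⁻¹ • (star s * s) ≤ a := by
    calc (‖X‖ ^ 2 : ℝ)⁻¹ • (star s * s)
        ≤ (‖X‖ ^ 2 : ℝ)⁻¹ • ((‖X‖ ^ 2 : ℝ) • a) :=
          smul_le_smul_of_nonneg_left hCS (by positivity)
      _ = a := by rw [smul_smul, inv_mul_cancel₀ (ne_of_gt hc), one_smul]
  have hau : IsUnit a := CStarAlgebra.isUnit_of_le _ hle (IsStrictlyPositive.iff_of_unital.mpr ⟨hsc0, hsc⟩)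
  -- conclude with the inverse square root
  set r : B := a ^ (-(1 / 2) : ℝ) with hr
  have hr0 : (0 : B) ≤ r := CFC.rpow_nonneg
  have hrs : star r = r := (IsSelfAdjoint.of_nonneg hr0).star_eq
  refine ⟨Y <• r, ?_⟩
  rw [RightCStarModule.inner_op_smul_right, rinner_op_smul_left, hrs, ← ha]
  exact CFC.conjugate_rpow_neg_one_half a (IsStrictlyPositive.iff_of_unital.mpr ⟨ha0, hau⟩)
end

section
/- Let E be a Hilbert module over a C*-algebra B such that the C*-algebra K(E) of compact operators on E is unital. Then E is algebraically finitely generated: there exist x_1,…,x_n ∈ E with E = span{x_i b : 1 ≤ i ≤ n, b ∈ B}. -/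
open scoped RightActions

/-- The Hilbert C⋆-module class as it stood in Mathlib (December 2024): a *right* `A`-module
(`SMul Aᵐᵒᵖ E`) whose `A`-valued inner product is `A`-linear on the right in the second argument.
Mathlib's current `CStarModule` uses a left action instead, so the old notion is spelled out. -/
class CStarModuleRight (A E : Type*) [NonUnitalSemiring A] [StarRing A] [Module ℂ A]
    [AddCommGroup E] [Module ℂ E] [PartialOrder A] [SMul Aᵐᵒᵖ E] [Norm A] [Norm E]
    extends Inner A E where
  inner_add_right {x} {y} {z} : inner x (y + z) = inner x y + inner x z
  inner_self_nonneg {x} : 0 ≤ inner x x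
  inner_self {x} : inner x x = 0 ↔ x = 0
  inner_op_smul_right {a : A} {x y : E} : inner x (y <• a) = inner x y * a
  inner_smul_right_complex {z : ℂ} {x} {y} : inner x (z • y) = z • inner x y
  star_inner x y : star (inner x y) = inner y x
  norm_eq_sqrt_norm_inner_self x : ‖x‖ = √‖inner x x‖

/-- **Corollary 3.4.** Let `E` be a Hilbert module over a
C*-algebra `B` such that the C*-algebra `K(E)` of compact operators on `E` is
unital (equivalently, the identity operator is a norm limit of finite-rank
operators `z ↦ ∑ i, xᵢ⟪yᵢ, z⟫`). Then `E` is algebraically finitely generated: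
there are `x₁, …, xₙ ∈ E` with `E = span {xᵢ b : 1 ≤ i ≤ n, b ∈ B}`. -/
theorem finitely_generated_of_compacts_unital
    {B : Type*} [CStarAlgebra B] [PartialOrder B] [StarOrderedRing B]
    {E : Type*} [NormedAddCommGroup E] [NormedSpace ℂ E] [Module Bᵐᵒᵖ E]
    [CStarModuleRight B E] [CompleteSpace E]
    (hunital : (1 : E →L[ℂ] E) ∈ closure
      {T : E →L[ℂ] E | ∃ (n : ℕ) (x y : Fin n → E),
        ∀ z : E, T z = ∑ i, (x i) <• (inner B (y i) z : B)}) :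
    ∃ (n : ℕ) (x : Fin n → E), ∀ z : E,
      z ∈ Submodule.span ℂ {w : E | ∃ (i : Fin n) (b : B), w = (x i) <• b} := by
  obtain ⟨T, hT, hdist⟩ := Metric.mem_closure_iff.mp hunital 1 one_pos
  obtain ⟨n, x, y, hxy⟩ := hT
  -- T is invertible since ‖1 - T‖ < 1
  have hnorm : ‖(1 : E →L[ℂ] E) - T‖ < 1 := by
    rwa [← dist_eq_norm]
  let u : (E →L[ℂ] E)ˣ := Units.oneSub _ hnorm
  refine ⟨n, x, fun z => ?_⟩
  have hu : (u : E →L[ℂ] E) = T := sub_sub_cancel 1 T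
  have hz : z = T ((↑u⁻¹ : E →L[ℂ] E) z) := by
    rw [← hu]
    have := u.mul_inv
    calc z = ((u * ↑u⁻¹ : E →L[ℂ] E)) z := by rw [this]; simp
    _ = (u : E →L[ℂ] E) ((↑u⁻¹ : E →L[ℂ] E) z) := rfl
  rw [hz, hxy]
  apply Submodule.sum_mem
  intro i _
  exact Submodule.subset_span ⟨i, _, rfl⟩
end

section
/- Let B be a W*-algebra, E a W*-correspondence over B, and n an infinite cardinal. Suppose x_ℓ (ℓ ∈ S, #S = l ≤ n) are elements of E with Σ_{ℓ∈S} ⟨x_ℓ, x_ℓ⟩ = 1 (σ-strong convergence). Fix a bijection φ : T → S × T where #T = n, with components φ₁, φ₂. Define the matrix X = (x_{ij})_{i,j∈T} by x_{ij} = x_{φ₁(i)} δ_{φ₂(i), j}. Then X is a unit vector in M_n(E): for all i,j ∈ T, Σ_{k∈T} ⟨x_{ki}, x_{kj}⟩ = δ_{ij}·1. -/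
open ContinuousLinearMap
open scoped Classical

theorem hasSum_ite_snd_eq {M S T : Type*} [AddCommMonoid M] [TopologicalSpace M]
    {f : S → M} {a : M} (hf : HasSum f a) (t₀ : T) :
    HasSum (fun p : S × T => if p.2 = t₀ then f p.1 else 0) a := by
  have hinj : Function.Injective fun ℓ : S => (ℓ, t₀) := fun _ _ h => congrArg Prod.fst h
  refine (hinj.hasSum_iff ?_).mp (by simpa [Function.comp_def] using hf)
  rintro ⟨ℓ, t⟩ hp
  have ht : t ≠ t₀ := by
    rintro rfl
    exact hp ⟨ℓ, rfl⟩
  simp [ht]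

theorem matrix_unit_vector_general
    {G H : Type*}
    [NormedAddCommGroup G] [InnerProductSpace ℂ G] [CompleteSpace G]
    [NormedAddCommGroup H] [InnerProductSpace ℂ H] [CompleteSpace H]
    {S T : Type*}
    (x : S → (G →L[ℂ] H))
    (h_sum : ∀ g : G, HasSum (fun ℓ : S => adjoint (x ℓ) (x ℓ g)) g)
    (φ : T ≃ S × T)
    (X : T → T → (G →L[ℂ] H))
    (hX : ∀ i j : T, X i j = if (φ i).2 = j then x (φ i).1 else 0) :
    ∀ (i j : T) (g : G),
      HasSum (fun k : T => adjoint (X k i) (X k j g))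
        (if i = j then g else 0) := by
  intro i j g
  -- Reindexed along `φ`, column `i` of `X` is the family `x` placed in the block `S × {i}`.
  rw [← φ.symm.hasSum_iff]
  have hterm : ∀ p : S × T, adjoint (X (φ.symm p) i) (X (φ.symm p) j g) =
      if i = j then (if p.2 = i then adjoint (x p.1) (x p.1 g) else 0) else 0 := by
    rintro ⟨ℓ, t⟩
    simp only [hX, Equiv.apply_symm_apply]
    split_ifs <;> simp_all
  simp only [Function.comp_def, hterm]
  split_ifs with hij
  · exact hasSum_ite_snd_eq (h_sum g) i
  · exact hasSum_zero

/-- **Proposition 6.2, key computation.** Work in the concrete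
picture of a W*-correspondence `E` over `B ⊆ B(G)`, realized inside
`B(G, H)` with `⟪x, y⟫ = x* y`. Suppose `x_ℓ (ℓ ∈ S)` satisfy
`∑_{ℓ ∈ S} ⟪x_ℓ, x_ℓ⟫ = 1` σ-strongly, `T` has infinite cardinality with a
bijection `φ : T ≃ S × T`, and the matrix `X = (x_{ij})_{i,j ∈ T}` is defined
by `x_{ij} = x_{φ₁(i)} δ_{φ₂(i), j}`. Then `X` is a unit vector in `M_n(E)`:
for all `i, j ∈ T`, `∑_{k ∈ T} ⟪x_{ki}, x_{kj}⟫ = δ_{ij} · 1` σ-strongly. -/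
theorem matrix_unit_vector
    {G H : Type*}
    [NormedAddCommGroup G] [InnerProductSpace ℂ G] [CompleteSpace G]
    [NormedAddCommGroup H] [InnerProductSpace ℂ H] [CompleteSpace H]
    {S T : Type*} [Infinite T]
    (x : S → (G →L[ℂ] H))
    (h_sum : ∀ g : G, HasSum (fun ℓ : S => adjoint (x ℓ) (x ℓ g)) g)
    (φ : T ≃ S × T)
    (X : T → T → (G →L[ℂ] H))
    (hX : ∀ i j : T, X i j = if (φ i).2 = j then x (φ i).1 else 0) :
    ∀ (i j : T) (g : G),
      HasSum (fun k : T => adjoint (X k i) (X k j g))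
        (if i = j then g else 0) :=
  matrix_unit_vector_general x h_sum φ X hX
end
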